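/- arXiv:1603.03649 — 5 statements merged into one kernel-verified Lean document; each statement's English description precedes it below -/
import Mathlib

section
/- For elements a, b of a commutative ring R with a, 1-a, b, 1-b, a-b all units, the map λ sending the pre-Bloch symbol [a] to a ⊗ (1-a) in R^× ⊗_ℤ R^× satisfies: λ applied to the five-term element [a] - [b] + [b/a] - [(1-a^{-1})/(1-b^{-1})] + [(1-a)/(1-b)] equals a ⊗ ((1-a)/(1-b)) + ((1-a)/(1-b)) ⊗ a. Consequently λ induces a well-defined homomorphism from the pre-Bloch group 𝔭(R) to (R^× ⊗_ℤ R^×)_σ. -/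
open scoped TensorProduct

/-- `R^× ⊗_ℤ R^×`. -/
abbrev unitsTensor (R : Type) [CommRing R] : Type :=
  (Additive Rˣ) ⊗[ℤ] (Additive Rˣ)

/-- Symbols `[a]` of the pre-Bloch group: units `a` with `1 - a` also a unit. -/
abbrev BlochSym (R : Type) [CommRing R] : Type := {a : Rˣ // IsUnit (1 - (a : R))}

/-- The element `a ⊗ (1 - a)` of `R^× ⊗_ℤ R^×`. -/
noncomputable def lamTerm {R : Type} [CommRing R] (a : Rˣ) (h : IsUnit (1 - (a : R))) :
    unitsTensor R :=
  Additive.ofMul a ⊗ₜ[ℤ] Additive.ofMul h.unit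

/-- The subgroup of five-term relations defining the pre-Bloch group: for `a, b` with
`a, 1-a, b, 1-b, a-b` units, the element
`[a] - [b] + [b/a] - [(1-a⁻¹)/(1-b⁻¹)] + [(1-a)/(1-b)]`. -/
def preBlochRel (R : Type) [CommRing R] : AddSubgroup (FreeAbelianGroup (BlochSym R)) :=
  AddSubgroup.closure
    {x | ∃ a b c d e : BlochSym R,
      IsUnit ((a.1 : R) - (b.1 : R)) ∧
      (c.1 : Rˣ) * a.1 = b.1 ∧
      (d.1 : R) * (1 - ((b.1⁻¹ : Rˣ) : R)) = 1 - ((a.1⁻¹ : Rˣ) : R) ∧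
      (e.1 : R) * (1 - (b.1 : R)) = 1 - (a.1 : R) ∧
      x = FreeAbelianGroup.of a - FreeAbelianGroup.of b + FreeAbelianGroup.of c -
            FreeAbelianGroup.of d + FreeAbelianGroup.of e}

/-- The pre-Bloch group `𝔭(R)`. -/
abbrev preBloch (R : Type) [CommRing R] : Type := FreeAbelianGroup (BlochSym R) ⧸ preBlochRel R

/-- The subgroup of `R^× ⊗ R^×` generated by the elements `c ⊗ d + d ⊗ c`. -/
def sigmaRel (R : Type) [CommRing R] : Submodule ℤ (unitsTensor R) :=
  Submodule.span ℤ {x | ∃ c d : Rˣ,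
    x = Additive.ofMul c ⊗ₜ[ℤ] Additive.ofMul d + Additive.ofMul d ⊗ₜ[ℤ] Additive.ofMul c}

/-- `(R^× ⊗_ℤ R^×)_σ`. -/
abbrev unitsTensorSigma (R : Type) [CommRing R] : Type := unitsTensor R ⧸ sigmaRel R

/-!
Write `u = 1 - a`, `v = 1 - b`, `w = a - b`. The five arguments of the relation and their
complements are all monomials in the units `a, b, u, v, w`:
`c = b a⁻¹`, `1 - c = w a⁻¹`, `d = u b a⁻¹ v⁻¹`, `1 - d = w a⁻¹ v⁻¹`, `e = u v⁻¹`, `1 - e = w v⁻¹`.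
Expanding `λ` bilinearly, everything cancels except `a ⊗ e + e ⊗ a`, which is killed in the
σ-coinvariants; so `λ` vanishes on the five-term relations and descends to `𝔭(R)`.
-/

open TensorProduct

section

variable {R : Type} [CommRing R]

lemma lamTerm_eq_tmul {x y : Rˣ} (h : IsUnit (1 - (x : R))) (hy : (y : R) = 1 - x) :
    lamTerm x h = Additive.ofMul x ⊗ₜ[ℤ] Additive.ofMul y := by
  rw [lamTerm, show h.unit = y from Units.ext (h.unit_spec.trans hy.symm)]

lemma lamTerm_fiveTerm {a b c d e : Rˣ} (ha : IsUnit (1 - (a : R))) (hb : IsUnit (1 - (b : R)))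
    (hc : IsUnit (1 - (c : R))) (hd : IsUnit (1 - (d : R))) (he : IsUnit (1 - (e : R)))
    (hab : IsUnit ((a : R) - (b : R))) (hca : c * a = b)
    (hd_def : (d : R) * (1 - ((b⁻¹ : Rˣ) : R)) = 1 - ((a⁻¹ : Rˣ) : R))
    (he_def : (e : R) * (1 - (b : R)) = 1 - (a : R)) :
    lamTerm a ha - lamTerm b hb + lamTerm c hc - lamTerm d hd + lamTerm e he =
      Additive.ofMul a ⊗ₜ[ℤ] Additive.ofMul e + Additive.ofMul e ⊗ₜ[ℤ] Additive.ofMul a := by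
  set u := ha.unit
  set v := hb.unit
  set w := hab.unit
  have hu : (u : R) = 1 - a := ha.unit_spec
  have hv : (v : R) = 1 - b := hb.unit_spec
  have hw : (w : R) = a - b := hab.unit_spec
  have hca' : (c : R) * a = b := congrArg Units.val hca
  have hd_cleared : (d : R) * (1 - b) * a = (1 - a) * b := by
    linear_combination (-((a : R) * b)) * hd_def - (a * d : R) * b.mul_inv + (b : R) * a.mul_inv
  have hc_eq : c = b * a⁻¹ := eq_mul_inv_of_mul_eq hca
  have he_eq : e = u * v⁻¹ := eq_mul_inv_of_mul_eq <| Units.ext <| by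
    push_cast [hu, hv]; exact he_def
  have hd_eq : d = u * b * a⁻¹ * v⁻¹ := by
    refine eq_mul_inv_of_mul_eq (eq_mul_inv_of_mul_eq (Units.ext ?_))
    push_cast [hu, hv]; linear_combination hd_cleared
  have hc' : ((w * a⁻¹ : Rˣ) : R) = 1 - c := by
    rw [Units.val_mul, Units.mul_inv_eq_iff_eq_mul, hw]; linear_combination hca'
  have he' : ((w * v⁻¹ : Rˣ) : R) = 1 - e := by
    rw [Units.val_mul, Units.mul_inv_eq_iff_eq_mul, hw, hv]; linear_combination he_def
  have hd' : ((w * a⁻¹ * v⁻¹ : Rˣ) : R) = 1 - d := by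
    rw [Units.val_mul, Units.mul_inv_eq_iff_eq_mul, Units.val_mul, Units.mul_inv_eq_iff_eq_mul,
      hw, hv]
    linear_combination hd_cleared
  rw [lamTerm_eq_tmul ha hu, lamTerm_eq_tmul hb hv, lamTerm_eq_tmul hc hc',
    lamTerm_eq_tmul hd hd', lamTerm_eq_tmul he he', hc_eq, hd_eq, he_eq]
  simp only [ofMul_mul, ofMul_inv, add_tmul, tmul_add, neg_tmul, tmul_neg]
  abel

end

noncomputable def lamFree (R : Type) [CommRing R] :
    FreeAbelianGroup (BlochSym R) →+ unitsTensorSigma R :=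
  FreeAbelianGroup.lift fun s => Submodule.Quotient.mk (lamTerm s.1 s.2)

lemma preBlochRel_le_ker_lamFree (R : Type) [CommRing R] : preBlochRel R ≤ (lamFree R).ker := by
  rw [preBlochRel, AddSubgroup.closure_le]
  rintro x ⟨a, b, c, d, e, hab, hca, hd, he, rfl⟩
  simp only [SetLike.mem_coe, AddMonoidHom.mem_ker, map_add, map_sub, lamFree,
    FreeAbelianGroup.lift_apply_of, ← Submodule.Quotient.mk_sub, ← Submodule.Quotient.mk_add]
  rw [lamTerm_fiveTerm a.2 b.2 c.2 d.2 e.2 hab hca hd he, Submodule.Quotient.mk_eq_zero]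
  exact Submodule.subset_span ⟨a.1, e.1, rfl⟩

/-- (i) `λ([a]) = a ⊗ (1-a)` applied to the five-term relation gives
`a ⊗ ((1-a)/(1-b)) + ((1-a)/(1-b)) ⊗ a`; (ii) consequently `λ` induces a well-defined
homomorphism `𝔭(R) → (R^× ⊗_ℤ R^×)_σ`. -/
theorem stmt_1 (R : Type) [CommRing R] :
    (∀ (a b c d e : Rˣ) (ha : IsUnit (1 - (a : R))) (hb : IsUnit (1 - (b : R)))
        (hc : IsUnit (1 - (c : R))) (hd : IsUnit (1 - (d : R))) (he : IsUnit (1 - (e : R))),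
      IsUnit ((a : R) - (b : R)) →
      (c : Rˣ) * a = b →
      (d : R) * (1 - ((b⁻¹ : Rˣ) : R)) = 1 - ((a⁻¹ : Rˣ) : R) →
      (e : R) * (1 - (b : R)) = 1 - (a : R) →
      lamTerm a ha - lamTerm b hb + lamTerm c hc - lamTerm d hd + lamTerm e he =
        Additive.ofMul a ⊗ₜ[ℤ] Additive.ofMul e + Additive.ofMul e ⊗ₜ[ℤ] Additive.ofMul a) ∧
    (∃ φ : preBloch R →+ unitsTensorSigma R,
      ∀ s : BlochSym R,
        φ (QuotientAddGroup.mk' (preBlochRel R) (FreeAbelianGroup.of s)) =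
          Submodule.Quotient.mk (lamTerm s.1 s.2)) :=
  ⟨fun _ _ _ _ _ => lamTerm_fiveTerm,
    QuotientAddGroup.lift _ (lamFree R) (preBlochRel_le_ker_lamFree R),
    fun _ => FreeAbelianGroup.lift_apply_of _ _⟩
end

section
/- Let G be an abelian group and M a finitely generated ℤ[G]-module such that the coinvariants H_0(G, M) = M_G are zero. Then H_n(G, M) = 0 for all n ≥ 0. -/
open CategoryTheory

noncomputable instance repEnoughProjectives (G : Type) [Group G] :
    EnoughProjectives (Rep.{0} ℤ G) :=
  (Rep.equivalenceModuleMonoidAlgebra (k := ℤ) (G := G)).enoughProjectives_iff.mpr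
    inferInstance

/-- The subgroup of a representation generated by the elements `g • m - m`. -/
noncomputable def coinvRel {G : Type} [Group G] (M : Rep.{0} ℤ G) : AddSubgroup M :=
  AddSubgroup.closure {x : M | ∃ (g : G) (m : M), x = M.ρ g m - m}

/-- The underlying additive map of a morphism of representations. -/
noncomputable def repHom {G : Type} [Group G] {M N : Rep.{0} ℤ G} (f : M ⟶ N) : M →+ N :=
  AddMonoidHom.mk' (fun x => f.hom x) (map_add f.hom)

lemma repHom_comm {G : Type} [Group G] {M N : Rep.{0} ℤ G} (f : M ⟶ N) (g : G) (m : M) :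
    repHom f (M.ρ g m) = N.ρ g (repHom f m) := by
  exact Rep.hom_comm_apply f g m

lemma coinvRel_le {G : Type} [Group G] {M N : Rep.{0} ℤ G} (f : M ⟶ N) :
    coinvRel M ≤ (coinvRel N).comap (repHom f) := by
  rw [coinvRel, AddSubgroup.closure_le]
  rintro x ⟨g, m, rfl⟩
  simp only [Set.mem_setOf_eq, AddSubgroup.coe_comap, Set.mem_preimage, SetLike.mem_coe,
    map_sub, repHom_comm]
  exact AddSubgroup.subset_closure ⟨g, repHom f m, rfl⟩

/-- The induced map on coinvariants. -/
noncomputable def coinvMap {G : Type} [Group G] {M N : Rep.{0} ℤ G} (f : M ⟶ N) :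
    (M ⧸ coinvRel M) →+ (N ⧸ coinvRel N) :=
  QuotientAddGroup.map _ _ (repHom f) (coinvRel_le f)

/-- The coinvariants functor `Rep ℤ G ⥤ Ab`, `M ↦ M_G`. -/
noncomputable def coinvFunctor (G : Type) [Group G] : Rep.{0} ℤ G ⥤ AddCommGrpCat where
  obj M := AddCommGrpCat.of (M ⧸ coinvRel M)
  map {M N} f := AddCommGrpCat.ofHom (coinvMap f)
  map_id M := by
    ext x
    rfl
  map_comp {M N P} f g := by
    ext x
    rfl

noncomputable instance coinvAdditive (G : Type) [Group G] : (coinvFunctor G).Additive where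
  map_add := by
    intros M N f g
    ext x
    induction x using QuotientAddGroup.induction_on with
    | H m => rfl

/-- Group homology `H_n(G, M)`, as the left derived functors of coinvariants. -/
noncomputable def derivedHomology (G : Type) [Group G] (n : ℕ) (M : Rep.{0} ℤ G) : AddCommGrpCat :=
  ((coinvFunctor G).leftDerived n).obj M

/-!
Since `M` is finitely generated over `ℤ[G]` and equals `I_G • M` (vanishing coinvariants),
Nakayama's lemma gives `z ∈ ℤ[G]` of augmentation `1` with `z • M = 0`. As `G` is abelian,
multiplication by `z` is a natural endomorphism of the identity functor of `Rep ℤ G`. On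
coinvariants it is multiplication by the augmentation of `z`, i.e. the identity, so it induces the
identity on every left derived functor `H_n(G, -)`; on `M` it is zero. Hence the identity of
`H_n(G, M)` is zero.
-/

namespace CategoryTheory

open Limits

variable {C D : Type*} [Category C] [Category D] [Abelian C] [HasProjectiveResolutions C]
  [Abelian D]

theorem Functor.leftDerived_map_zero (F : C ⥤ D) [F.Additive] (n : ℕ) (X Y : C) :
    (F.leftDerived n).map (0 : X ⟶ Y) = 0 := by
  rw [F.leftDerived_map_eq n _ (P := projectiveResolution X) (Q := projectiveResolution Y) 0
    (by simp), Functor.map_zero, zero_comp, comp_zero]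

theorem Functor.leftDerived_map_app_eq_id (F : C ⥤ D) [F.Additive] (η : 𝟭 C ⟶ 𝟭 C)
    (hη : ∀ X, F.map (η.app X) = 𝟙 _) (n : ℕ) (X : C) :
    (F.leftDerived n).map (η.app X) = 𝟙 _ := by
  let P := projectiveResolution X
  let φ : P.complex ⟶ P.complex :=
    { f := fun i => η.app (P.complex.X i)
      comm' := fun i j _ => (η.naturality (P.complex.d i j)).symm }
  have w : φ ≫ P.π = P.π ≫ (ChainComplex.single₀ C).map (η.app X) := by
    ext
    simp only [HomologicalComplex.comp_f, ChainComplex.single₀_map_f_zero]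
    exact (η.naturality (P.π.f 0)).symm
  have hφ : (F.mapHomologicalComplex _).map φ = 𝟙 _ := by
    ext i
    exact hη _
  rw [F.leftDerived_map_eq n _ φ w, Functor.comp_map, hφ, Functor.map_id, Category.id_comp,
    Iso.hom_inv_id]
  rfl

end CategoryTheory

namespace Representation

variable {k G V W : Type*} [CommSemiring k] [Monoid G] [AddCommMonoid V] [AddCommMonoid W]
  [Module k V] [Module k W] {ρ : Representation k G V} {σ : Representation k G W}

theorem IntertwiningMap.map_asAlgebraHom (f : ρ.IntertwiningMap σ) (z : MonoidAlgebra k G)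
    (v : V) : f (ρ.asAlgebraHom z v) = σ.asAlgebraHom z (f v) := by
  induction z using MonoidAlgebra.induction_linear with
  | zero => simp
  | add x y hx hy => simp [hx, hy]
  | single g a => simp [asAlgebraHom_single, ← isIntertwining]

end Representation

universe w

namespace Rep

variable {k G : Type*} [CommRing k] [CommMonoid G]

noncomputable def groupAlgebraAction (z : MonoidAlgebra k G) :
    𝟭 (Rep.{w} k G) ⟶ 𝟭 (Rep.{w} k G) where
  app M := Rep.ofHom (Representation.IntertwiningMap.centralAlgebraMul M.ρ (z := z) (by simp))
  naturality M N f := by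
    ext x
    exact (f.hom.map_asAlgebraHom z x).symm

theorem groupAlgebraAction_app_hom_apply (z : MonoidAlgebra k G) (M : Rep.{w} k G) (x : M) :
    ((groupAlgebraAction z).app M).hom x = Representation.asAlgebraHom M.ρ z x := rfl

end Rep

theorem Representation.map_asAlgebraHom_eq_counit_smul {G V W : Type*} [Monoid G]
    [AddCommGroup V] [Module ℤ V] [AddCommGroup W] (ρ : Representation ℤ G V) (f : V →+ W)
    (hf : ∀ g v, f (ρ g v) = f v) (z : MonoidAlgebra ℤ G) (v : V) :
    f (ρ.asAlgebraHom z v) = Coalgebra.counit (R := ℤ) z • f v := by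
  induction z using MonoidAlgebra.induction_linear with
  | zero => simp
  | add x y hx hy => simp [hx, hy, add_smul]
  | single g a =>
    rw [Representation.asAlgebraHom_single, MonoidAlgebra.counit_single, ← hf g v]
    exact map_intCast_smul f ℤ ℤ a (ρ g v)

theorem coinvFunctor_map_groupAlgebraAction {G : Type} [CommGroup G] (z : MonoidAlgebra ℤ G)
    (M : Rep.{0} ℤ G) :
    (coinvFunctor G).map ((Rep.groupAlgebraAction z).app M) =
      Coalgebra.counit (R := ℤ) z • 𝟙 _ := by
  ext x
  induction x using QuotientAddGroup.induction_on with
  | H m =>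
    show QuotientAddGroup.mk (((Rep.groupAlgebraAction z).app M).hom m) =
      Coalgebra.counit (R := ℤ) z • (QuotientAddGroup.mk m : M ⧸ coinvRel M)
    rw [Rep.groupAlgebraAction_app_hom_apply]
    -- `M.ρ` is linear for `M.hV2`, which synthesis would replace by `AddCommGroup.toIntModule`.
    let _ : Module ℤ M := M.hV2
    exact Representation.map_asAlgebraHom_eq_counit_smul M.ρ
      (QuotientAddGroup.mk' (coinvRel M))
      (fun g v => QuotientAddGroup.eq_iff_sub_mem.mpr (AddSubgroup.subset_closure ⟨g, v, rfl⟩))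
      z m

theorem exists_counit_eq_one_and_groupAlgebraAction_eq_zero {G : Type} [CommGroup G]
    (M : Rep.{0} ℤ G)
    (hfg : ∃ S : Finset M, ∀ N : AddSubgroup M,
      (↑S : Set M) ⊆ N → (∀ (g : G) (x : M), x ∈ N → M.ρ g x ∈ N) → N = ⊤)
    (h0 : coinvRel M = ⊤) :
    ∃ z : MonoidAlgebra ℤ G, Coalgebra.counit (R := ℤ) z = 1 ∧
      (Rep.groupAlgebraAction z).app M = 0 := by
  let _ : Module ℤ M := M.hV2
  let _ : Module (MonoidAlgebra ℤ G) M := Module.compHom M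
    (Representation.asAlgebraHom M.ρ : MonoidAlgebra ℤ G →+* Module.End ℤ M)
  have of_smul (g : G) (m : M) : MonoidAlgebra.of ℤ G g • m = M.ρ g m :=
    Representation.asAlgebraHom_of M.ρ g ▸ rfl
  have fg_top : (⊤ : Submodule (MonoidAlgebra ℤ G) M).FG := by
    obtain ⟨S, hS⟩ := hfg
    refine ⟨S, top_le_iff.mp fun m _ => ?_⟩
    have hspan := hS (Submodule.span (MonoidAlgebra ℤ G) (S : Set M)).toAddSubgroup
      (fun x hx => Submodule.subset_span hx)
      (fun g x hx => of_smul g x ▸ Submodule.smul_mem _ _ hx)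
    rw [← Submodule.mem_toAddSubgroup, hspan]
    trivial
  let I := RingHom.ker (Bialgebra.counitAlgHom ℤ (MonoidAlgebra ℤ G))
  have top_le_smul : (⊤ : Submodule (MonoidAlgebra ℤ G) M) ≤ I • ⊤ := by
    intro m _
    have hm : m ∈ coinvRel M := h0 ▸ AddSubgroup.mem_top m
    refine (AddSubgroup.closure_le
      (K := (I • ⊤ : Submodule (MonoidAlgebra ℤ G) M).toAddSubgroup)).mpr ?_ hm
    rintro _ ⟨g, x, rfl⟩
    rw [SetLike.mem_coe, Submodule.mem_toAddSubgroup, ← of_smul,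
      ← one_smul (MonoidAlgebra ℤ G) x, smul_smul, mul_one, ← sub_smul]
    refine Submodule.smul_mem_smul ?_ Submodule.mem_top
    simp [I]
  obtain ⟨z, hz₁, hz₀⟩ :=
    Submodule.exists_sub_one_mem_and_smul_eq_zero_of_fg_of_le_smul I ⊤ fg_top top_le_smul
  exact ⟨z, by simpa [I, sub_eq_zero] using hz₁,
    Rep.hom_ext (DFunLike.ext _ _ fun m => hz₀ m Submodule.mem_top)⟩

/-- If `G` is an abelian group and `M` a finitely generated `ℤ[G]`-module (i.e. there is a
finite subset not contained in any proper `G`-stable subgroup) with vanishing coinvariants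
`H₀(G, M) = M_G = 0`, then `H_n(G, M) = 0` for all `n`. -/
theorem stmt_4 (G : Type) [CommGroup G] (M : Rep.{0} ℤ G)
    (hfg : ∃ S : Finset M, ∀ N : AddSubgroup M,
      (↑S : Set M) ⊆ N → (∀ (g : G) (x : M), x ∈ N → M.ρ g x ∈ N) → N = ⊤)
    (h0 : coinvRel M = ⊤) :
    ∀ n : ℕ, Subsingleton (derivedHomology G n M) := by
  intro n
  obtain ⟨z, hz₁, hz₀⟩ := exists_counit_eq_one_and_groupAlgebraAction_eq_zero M hfg h0
  have hid := (coinvFunctor G).leftDerived_map_app_eq_id (Rep.groupAlgebraAction z)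
    (fun N => by rw [coinvFunctor_map_groupAlgebraAction, hz₁, one_smul]) n M
  rw [hz₀, Functor.leftDerived_map_zero] at hid
  exact AddCommGrpCat.subsingleton_of_isZero ((Limits.IsZero.iff_id_eq_zero _).mpr hid.symm)
end

section
/- Let R be a local ring whose residue field R/m_R has more than two elements, let T_2 ≅ R^× × R^× be the diagonal torus in GL_2(R) and B_2 the upper triangular Borel subgroup. Then the natural surjection B_2 → T_2 induces an isomorphism H_1(B_2, ℤ) ≅ H_1(T_2, ℤ). -/
/-!
In the bar complex every `1`-chain is a cycle, and the boundary of the `2`-simplex `(h, g)` is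
`[g] - [g * h] + [h]`; so `g ↦ [g]` is a homomorphism `G → H₁` whose image generates `H₁`, and
the map a homomorphism induces on `H₁` only depends on it modulo commutators.

The surjection `B₂ = R ⋊ T₂ → T₂` is split by `T₂ → B₂`, so it suffices that the composite
`B₂ → T₂ → B₂` is the identity modulo commutators, i.e. that `R ⊆ [B₂, B₂]`. As the residue field
has an element other than `0` and `1`, there is a unit `u` with `1 - u` a unit, and then every
`x ∈ R` is the commutator of `(1 - u)⁻¹ x ∈ R` with `(u, 1) ∈ T₂`, which acts on `R` by `u`.
-/

open CategoryTheory AlgebraicTopology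

/-- The chain complex of the classifying space of `G`, with coefficients in `k`:
the levelwise free `k`-module on the nerve of `G`. -/
noncomputable def barComplex (k : Type) [Ring k] (G : Type) [Group G] :
    ChainComplex (ModuleCat k) ℕ :=
  (alternatingFaceMapComplex (ModuleCat k)).obj
    (((SimplicialObject.whiskering _ _).obj (ModuleCat.free k)).obj (nerve (SingleObj G)))

/-- Group homology `H_n(G, k)` with trivial coefficients `k`, defined as the homology of the
classifying space of `G` with coefficients in `k`. -/
noncomputable def grpHomology (k : Type) [Ring k] (G : Type) [Group G] (n : ℕ) : ModuleCat k :=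
  (barComplex k G).homology n

/-- The chain map induced by a group homomorphism. -/
noncomputable def barMap (k : Type) [Ring k] {G H : Type} [Group G] [Group H] (f : G →* H) :
    barComplex k G ⟶ barComplex k H :=
  (alternatingFaceMapComplex (ModuleCat k)).map
    (((SimplicialObject.whiskering _ _).obj (ModuleCat.free k)).map
      (nerveFunctor.map (X := Cat.of (SingleObj G)) (Y := Cat.of (SingleObj H))
        (SingleObj.mapHom G H f).toCatHom))

/-- The map on group homology induced by a group homomorphism. -/
noncomputable def grpHomologyMap (k : Type) [Ring k] {G H : Type} [Group G] [Group H]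
    (f : G →* H) (n : ℕ) : grpHomology k G n ⟶ grpHomology k H n :=
  HomologicalComplex.homologyMap (barMap k f) n

/-- `AddAut A` maps to `MulAut (Multiplicative A)`. -/
def addAutToMulAut {A : Type} [AddCommGroup A] :
    Multiplicative (AddAut A) →* MulAut (Multiplicative A) where
  toFun e := AddEquiv.toMultiplicative e.toAdd
  map_one' := by ext x; rfl
  map_mul' e₁ e₂ := by ext x; rfl

/-- The action of the diagonal torus `T₂ = Rˣ × Rˣ` on `(R, +)` by `(a, b) · x = a b⁻¹ x`,
realizing the Borel subgroup `B₂` of upper triangular matrices as `R ⋊ T₂`. -/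
def torusAction (R : Type) [CommRing R] : Rˣ × Rˣ →* MulAut (Multiplicative R) :=
  addAutToMulAut.comp ((DistribMulAction.toAddAut Rˣ R).comp
    (MonoidHom.mk' (fun p : Rˣ × Rˣ => p.1 * p.2⁻¹) (fun a b => by
      show (a * b).1 * ((a * b).2)⁻¹ = _
      rw [Prod.fst_mul, Prod.snd_mul, mul_inv, mul_mul_mul_comm])))

open HomologicalComplex

section Nerve

variable {G : Type} [Group G]

def nerveEdge (g : G) : ComposableArrows (SingleObj G) 1 :=
  ComposableArrows.mk₁ (X₀ := SingleObj.star G) (X₁ := SingleObj.star G) g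

def nerveTriangle (g h : G) : ComposableArrows (SingleObj G) 2 :=
  ComposableArrows.mk₂ (X₀ := SingleObj.star G) (X₁ := SingleObj.star G)
    (X₂ := SingleObj.star G) g h

lemma nerveEdge_surjective : Function.Surjective (nerveEdge (G := G)) := by
  intro σ
  obtain ⟨_, _, g, rfl⟩ := ComposableArrows.mk₁_surjective σ
  exact ⟨g, rfl⟩

lemma nerve_δ_zero_nerveTriangle (g h : G) :
    (nerve (SingleObj G)).δ 0 (nerveTriangle g h) = nerveEdge h :=
  ComposableArrows.ext₁ rfl rfl <| by
    simp only [eqToHom_refl, Category.comp_id, Category.id_comp]; rfl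

lemma nerve_δ_one_nerveTriangle (g h : G) :
    (nerve (SingleObj G)).δ 1 (nerveTriangle g h) = nerveEdge (h * g) :=
  ComposableArrows.ext₁ rfl rfl <| by
    simp only [eqToHom_refl, Category.comp_id, Category.id_comp]; rfl

lemma nerve_δ_two_nerveTriangle (g h : G) :
    (nerve (SingleObj G)).δ 2 (nerveTriangle g h) = nerveEdge g :=
  ComposableArrows.ext₁ rfl rfl <| by
    simp only [eqToHom_refl, Category.comp_id, Category.id_comp]; rfl

lemma nerve_δ_zero_eq_δ_one :
    (nerve (SingleObj G)).δ (0 : Fin 2) = (nerve (SingleObj G)).δ 1 := by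
  ext σ
  exact ComposableArrows.ext₀ rfl

lemma nerveEdge_comp_mapHom {H : Type} [Group H] (f : G →* H) (g : G) :
    nerveEdge g ⋙ SingleObj.mapHom G H f = nerveEdge (f g) :=
  ComposableArrows.ext₁ rfl rfl <| by
    simp only [eqToHom_refl, Category.comp_id, Category.id_comp]; rfl

end Nerve

section BarComplex

variable (k : Type) [Ring k] {G H P : Type} [Group G] [Group H] [Group P]

noncomputable def barChain {n : ℕ} (σ : ComposableArrows (SingleObj G) n) :
    (barComplex k G).X n :=
  ModuleCat.freeMk σ

variable {k} in
lemma barComplex_hom_ext {n : ℕ} {M : ModuleCat k} {f g : (barComplex k G).X n ⟶ M}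
    (h : ∀ σ, f (barChain k σ) = g (barChain k σ)) : f = g :=
  ModuleCat.free_hom_ext h

lemma barComplex_d_eq (n : ℕ) :
    (barComplex k G).d (n + 1) n = ∑ i : Fin (n + 2), (-1 : ℤ) ^ (i : ℕ) •
      (ModuleCat.free k).map ((nerve (SingleObj G)).δ i) :=
  AlternatingFaceMapComplex.obj_d_eq _ n

lemma barComplex_d_barChain (n : ℕ) (σ : ComposableArrows (SingleObj G) (n + 1)) :
    (barComplex k G).d (n + 1) n (barChain k σ) =
      ∑ i : Fin (n + 2), (-1 : ℤ) ^ (i : ℕ) • barChain k ((nerve (SingleObj G)).δ i σ) := by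
  rw [barComplex_d_eq]
  change (∑ i : Fin (n + 2), (-1 : ℤ) ^ (i : ℕ) •
    (ModuleCat.free k).map ((nerve (SingleObj G)).δ i)).hom (ModuleCat.freeMk σ) = _
  simp only [ModuleCat.hom_sum, LinearMap.sum_apply, ModuleCat.hom_zsmul, LinearMap.smul_apply]
  exact Finset.sum_congr rfl fun i _ => congrArg _ (ModuleCat.free_map_apply _ _)

lemma barComplex_d_one_zero : (barComplex k G).d 1 0 = 0 := by
  refine barComplex_hom_ext fun σ => ?_
  rw [barComplex_d_barChain, Fin.sum_univ_two, nerve_δ_zero_eq_δ_one]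
  simp

lemma barComplex_d_barChain_nerveTriangle (g h : G) :
    (barComplex k G).d 2 1 (barChain k (nerveTriangle g h)) =
      barChain k (nerveEdge h) - barChain k (nerveEdge (h * g)) + barChain k (nerveEdge g) := by
  rw [barComplex_d_barChain, Fin.sum_univ_three, nerve_δ_zero_nerveTriangle,
    nerve_δ_one_nerveTriangle, nerve_δ_two_nerveTriangle]
  simp [sub_eq_add_neg]

lemma barMap_f_barChain {n : ℕ} (f : G →* H) (σ : ComposableArrows (SingleObj G) n) :
    (barMap k f).f n (barChain k σ) = barChain k (σ ⋙ SingleObj.mapHom G H f) :=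
  ModuleCat.free_map_apply _ _

lemma barMap_id : barMap k (MonoidHom.id G) = 𝟙 (barComplex k G) := by
  ext n : 1
  refine barComplex_hom_ext fun σ => ?_
  rw [barMap_f_barChain, SingleObj.mapHom_id, Functor.comp_id]
  rfl

lemma barMap_comp (f : G →* H) (g : H →* P) :
    barMap k (g.comp f) = barMap k f ≫ barMap k g := by
  ext n : 1
  refine barComplex_hom_ext fun σ => ?_
  rw [HomologicalComplex.comp_f, ModuleCat.comp_apply, barMap_f_barChain, barMap_f_barChain,
    barMap_f_barChain, SingleObj.mapHom_comp]
  rfl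

end BarComplex

section FirstHomology

variable (k : Type) [Ring k] (G : Type) {H : Type} [Group G] [Group H]

noncomputable def oneChainClass : (barComplex k G).X 1 ⟶ (barComplex k G).homology 1 :=
  (barComplex k G).pOpcycles 1 ≫
    ((barComplex k G).isoHomologyι 1 0 (by simp) (barComplex_d_one_zero k)).inv

instance : Epi (oneChainClass k G) :=
  epi_comp _ _

lemma barComplex_d_comp_oneChainClass : (barComplex k G).d 2 1 ≫ oneChainClass k G = 0 := by
  rw [oneChainClass, d_pOpcycles_assoc, Limits.zero_comp]

variable {G}

lemma barMap_f_comp_oneChainClass (f : G →* H) :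
    (barMap k f).f 1 ≫ oneChainClass k H = oneChainClass k G ≫ homologyMap (barMap k f) 1 := by
  rw [← cancel_mono ((barComplex k H).homologyι 1)]
  simp [oneChainClass, homologyι_naturality, p_opcyclesMap]

variable (G)

lemma oneChainClass_barChain_nerveEdge_mul (g h : G) :
    oneChainClass k G (barChain k (nerveEdge (g * h))) =
      oneChainClass k G (barChain k (nerveEdge g)) +
        oneChainClass k G (barChain k (nerveEdge h)) := by
  have hd := congr(oneChainClass k G $(barComplex_d_barChain_nerveTriangle k h g))
  rw [← ConcreteCategory.comp_apply, barComplex_d_comp_oneChainClass, map_add, map_sub] at hd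
  simp only [ModuleCat.hom_zero, LinearMap.zero_apply] at hd
  rw [sub_add_eq_add_sub, eq_comm, sub_eq_zero] at hd
  exact hd.symm

noncomputable def edgeClass : G →* Multiplicative ((barComplex k G).homology 1) :=
  MonoidHom.mk' (fun g => .ofAdd (oneChainClass k G (barChain k (nerveEdge g))))
    (oneChainClass_barChain_nerveEdge_mul k G)

end FirstHomology

lemma homologyMap_barMap_one_congr (k : Type) [Ring k] {G H : Type} [Group G] [Group H]
    {f₁ f₂ : G →* H} (h : ∀ g, Abelianization.of (f₁ g) = Abelianization.of (f₂ g)) :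
    homologyMap (barMap k f₁) 1 = homologyMap (barMap k f₂) 1 := by
  have hclass (g : G) : edgeClass k H (f₁ g) = edgeClass k H (f₂ g) := by
    rw [← Abelianization.lift_apply_of (edgeClass k H), h, Abelianization.lift_apply_of]
  rw [← cancel_epi (oneChainClass k G), ← barMap_f_comp_oneChainClass,
    ← barMap_f_comp_oneChainClass]
  refine barComplex_hom_ext fun σ => ?_
  obtain ⟨g, rfl⟩ := nerveEdge_surjective σ
  rw [ModuleCat.comp_apply, ModuleCat.comp_apply, barMap_f_barChain, barMap_f_barChain,
    nerveEdge_comp_mapHom, nerveEdge_comp_mapHom]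
  exact congr(Multiplicative.toAdd $(hclass g))

lemma Abelianization.of_inr_rightHom {N G : Type} [Group N] [Group G] {φ : G →* MulAut N}
    (h : ∀ n : N, SemidirectProduct.inl n ∈ commutator (N ⋊[φ] G)) (g : N ⋊[φ] G) :
    of (SemidirectProduct.inr (SemidirectProduct.rightHom g)) = of g := by
  have hl : SemidirectProduct.inl g.left ∈ (of : N ⋊[φ] G →* _).ker := by
    rw [ker_of]; exact h _
  conv_rhs => rw [← SemidirectProduct.inl_left_mul_inr_right g]
  rw [map_mul, MonoidHom.mem_ker.mp hl, one_mul, SemidirectProduct.rightHom_eq_right]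

theorem isIso_grpHomologyMap_one_rightHom (k : Type) [Ring k] {N G : Type} [Group N] [Group G]
    {φ : G →* MulAut N} (h : ∀ n : N, SemidirectProduct.inl n ∈ commutator (N ⋊[φ] G)) :
    IsIso (grpHomologyMap k (SemidirectProduct.rightHom (φ := φ)) 1) := by
  refine ⟨grpHomologyMap k SemidirectProduct.inr 1, ?_, ?_⟩
  · change homologyMap _ 1 ≫ homologyMap _ 1 = 𝟙 _
    rw [← homologyMap_comp, ← barMap_comp,
      homologyMap_barMap_one_congr k (f₂ := MonoidHom.id _) (Abelianization.of_inr_rightHom h),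
      barMap_id, homologyMap_id]
  · change homologyMap _ 1 ≫ homologyMap _ 1 = 𝟙 _
    rw [← homologyMap_comp, ← barMap_comp, SemidirectProduct.rightHom_comp_inr, barMap_id,
      homologyMap_id]

lemma exists_ne_zero_ne_one_of_three_le_card {α : Type*} [Zero α] [One α]
    (h : 3 ≤ Nat.card α ∨ Infinite α) : ∃ r : α, r ≠ 0 ∧ r ≠ 1 := by
  by_contra! hc
  have hsurj : Function.Surjective fun b : Bool => if b then (1 : α) else 0 := fun r => by
    by_cases hr : r = 0
    · exact ⟨false, hr.symm⟩
    · exact ⟨true, (hc r hr).symm⟩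
  have : Finite α := Finite.of_surjective _ hsurj
  have := Nat.card_le_card_of_surjective _ hsurj
  rw [Nat.card_eq_fintype_card (α := Bool), Fintype.card_bool] at this
  rcases h with h | h
  · omega
  · exact not_finite α

lemma IsLocalRing.exists_isUnit_one_sub {R : Type*} [CommRing R] [IsLocalRing R]
    (h : ∃ r : ResidueField R, r ≠ 0 ∧ r ≠ 1) : ∃ u : Rˣ, IsUnit (1 - (u : R)) := by
  obtain ⟨r, hr0, hr1⟩ := h
  obtain ⟨a, rfl⟩ := residue_surjective r
  refine ⟨((residue_ne_zero_iff_isUnit a).mp hr0).unit, (residue_ne_zero_iff_isUnit _).mp ?_⟩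
  rwa [IsUnit.unit_spec, map_sub, map_one, sub_ne_zero, ne_comm]

lemma torusAction_apply_toAdd {R : Type} [CommRing R] (t : Rˣ × Rˣ) (x : Multiplicative R) :
    (torusAction R t x).toAdd = (t.1 * t.2⁻¹ : Rˣ) * x.toAdd :=
  rfl

open scoped commutatorElement in
lemma inl_mem_commutator_torusAction {R : Type} [CommRing R] {u : Rˣ} (hu : IsUnit (1 - (u : R)))
    (x : Multiplicative R) :
    SemidirectProduct.inl x ∈ commutator (Multiplicative R ⋊[torusAction R] (Rˣ × Rˣ)) := by
  set y : Multiplicative R := .ofAdd (((hu.unit⁻¹ : Rˣ) : R) * x.toAdd)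
  have hx : SemidirectProduct.inl x = ⁅SemidirectProduct.inl (φ := torusAction R) y,
      SemidirectProduct.inr (φ := torusAction R) (u, 1)⁆ := by
    refine SemidirectProduct.ext ?_ ?_
    · apply Multiplicative.toAdd.injective
      simp only [commutatorElement_def, y, SemidirectProduct.mul_left, SemidirectProduct.inv_left,
        SemidirectProduct.left_inl, SemidirectProduct.left_inr, SemidirectProduct.right_inl,
        SemidirectProduct.right_inr, SemidirectProduct.mul_right, map_one, MulAut.one_apply,
        map_inv, inv_one, mul_one, one_mul, toAdd_mul, toAdd_ofAdd, toAdd_inv, torusAction_apply_toAdd]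
      linear_combination (-x.toAdd) * hu.mul_val_inv
    · simp [commutatorElement_def, Prod.one_eq_mk]
  rw [hx]
  exact Subgroup.commutator_mem_commutator (Subgroup.mem_top _) (Subgroup.mem_top _)

/-- For a local ring whose residue field has more than two elements, the natural surjection
`B₂ → T₂` (here `B₂ = R ⋊ T₂`, `SemidirectProduct.rightHom`) induces an isomorphism
`H₁(B₂, ℤ) ≅ H₁(T₂, ℤ)`. -/
theorem stmt_6 (R : Type) [CommRing R] [IsLocalRing R]
    (h : 3 ≤ Nat.card (IsLocalRing.ResidueField R) ∨ Infinite (IsLocalRing.ResidueField R)) :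
    IsIso (grpHomologyMap ℤ
      (SemidirectProduct.rightHom (N := Multiplicative R) (φ := torusAction R)) 1) := by
  obtain ⟨u, hu⟩ := IsLocalRing.exists_isUnit_one_sub (exists_ne_zero_ne_one_of_three_le_card h)
  exact isIso_grpHomologyMap_one_rightHom ℤ (inl_mem_commutator_torusAction hu)
end

section
/- For the finite field 𝔽_4 = {0, 1, α, α+1} with α² = α+1, the coinvariants of the natural diagonal action of 𝔽_4^× on the antisymmetric part (𝔽_4 ⊗_ℤ 𝔽_4)^{-σ}, namely the subgroup of 𝔽_4 ⊗ 𝔽_4 generated by 1⊗1, α⊗α, 1⊗α + α⊗1, is isomorphic to ℤ/2. -/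
open scoped TensorProduct

/-- The diagonal action of a unit `u` on `F ⊗_ℤ F`: `u · (a ⊗ b) = ua ⊗ ub`. -/
noncomputable def diagAct {F : Type} [Field F] (u : Fˣ) : F ⊗[ℤ] F →ₗ[ℤ] F ⊗[ℤ] F :=
  TensorProduct.map (LinearMap.mulLeft ℤ (u : F)) (LinearMap.mulLeft ℤ (u : F))

set_option maxHeartbeats 2000000 in
/-- For `𝔽₄ = {0, 1, α, α + 1}` with `α² = α + 1`, the coinvariants of the diagonal
`𝔽₄ˣ`-action on the subgroup `(𝔽₄ ⊗_ℤ 𝔽₄)^{-σ}` generated by `1⊗1`, `α⊗α` and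
`1⊗α + α⊗1` form a group isomorphic to `ℤ/2`. -/
theorem stmt_8 (F : Type) [Field F] [Fintype F] (hF : Fintype.card F = 4)
    (α : F) (hα : α ^ 2 = α + 1) :
    let S : AddSubgroup (F ⊗[ℤ] F) := AddSubgroup.closure
      {(1 : F) ⊗ₜ[ℤ] (1 : F), α ⊗ₜ[ℤ] α, (1 : F) ⊗ₜ[ℤ] α + α ⊗ₜ[ℤ] (1 : F)}
    let K : AddSubgroup (F ⊗[ℤ] F) := AddSubgroup.closure
      {d | ∃ u : Fˣ, ∃ x ∈ S, d = diagAct u x - x}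
    Nonempty ((S ⧸ K.addSubgroupOf S) ≃+ ZMod 2) := by
  intro S K
  have h4 : ((4 : ℕ) : F) = 0 := by have := FiniteField.cast_card_eq_zero F; rwa [hF] at this
  have h2 : (2 : F) = 0 := by
    have hp : (ringChar F).Prime := CharP.char_is_prime F (ringChar F)
    have hd : ringChar F ∣ 4 := (CharP.cast_eq_zero_iff F (ringChar F) 4).mp h4
    have he : ringChar F = 2 := by
      have h44 : (4:ℕ) = 2^2 := by norm_num
      rw [h44] at hd
      rcases (Nat.dvd_prime_pow Nat.prime_two).mp hd with ⟨k, hk, hkk⟩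
      interval_cases k <;> simp_all <;> exact absurd hp (by norm_num)
    have : ((2:ℕ) : F) = 0 :=
      (CharP.cast_eq_zero_iff F (ringChar F) 2).mpr (by rw [he])
    exact_mod_cast this
  have h11 : (1 : F) + 1 = 0 := by linear_combination h2
  classical
  -- enumeration of F
  have hα0 : α ≠ 0 := fun h => by rw [h] at hα; simp at hα
  have hα1 : α ≠ 1 := fun h => by rw [h] at hα; exact one_ne_zero (by linear_combination hα + h2)
  have hab0 : α + 1 ≠ 0 := fun h => hα1 (by linear_combination h - h2)
  have hab1 : α + 1 ≠ 1 := fun h => hα0 (by linear_combination h)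
  have haba : α + 1 ≠ α := fun h => one_ne_zero (by linear_combination h)
  have henum : ∀ x : F, x = 0 ∨ x = 1 ∨ x = α ∨ x = α + 1 := by
    have hcard : ({0, 1, α, α + 1} : Finset F).card = 4 := by
      rw [Finset.card_insert_of_notMem (by simp [hα0.symm, hab0.symm]),
          Finset.card_insert_of_notMem (by simp [hα1.symm, hab1.symm]),
          Finset.card_insert_of_notMem (by simp [haba.symm]), Finset.card_singleton]
    have := Finset.eq_univ_of_card _ (hcard.trans hF.symm)
    intro x
    have hx : x ∈ ({0, 1, α, α + 1} : Finset F) := this ▸ Finset.mem_univ x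
    simpa using hx
  -- additive maps
  set T : F →+ F := AddMonoidHom.mk' (fun x => x + x * x)
    (fun x y => by linear_combination x * y * h2) with hTdef
  set C : F →+ F := AddMonoidHom.mk' (fun x => α^2 * x + (α^2 * x) * (α^2 * x))
    (fun x y => by linear_combination (α^2 * x) * (α^2 * y) * h2) with hCdef
  have hT1 : T 1 = 0 := by simp [hTdef, AddMonoidHom.mk'_apply]; linear_combination h2
  have hTa : T α = 1 := by simp [hTdef, AddMonoidHom.mk'_apply]; linear_combination hα + α * h2
  have hTb : T (α + 1) = 1 := by
    simp [hTdef, AddMonoidHom.mk'_apply]; linear_combination hα + (2*α+1) * h2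
  have hC1 : C 1 = 1 := by
    simp [hCdef, AddMonoidHom.mk'_apply]
    linear_combination (α^2+α+3) * hα + (2*α+1) * h2
  have hCa : C α = 0 := by
    simp [hCdef, AddMonoidHom.mk'_apply]
    linear_combination (α^4+α^3+2*α^2+4*α+6) * hα + (5*α+3) * h2
  have hCb : C (α + 1) = 1 := by
    simp [hCdef, AddMonoidHom.mk'_apply]
    linear_combination (α^4+3*α^3+5*α^2+9*α+15) * hα + (12*α+7) * h2
  -- the bilinear detecting map
  set B : F →+ F →+ F := AddMonoidHom.mk'
    (fun a => AddMonoidHom.mk' (fun b => C a * C b + T a * T b + C a * T b)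
      (fun b c => by simp only [map_add]; ring))
    (fun a b => by ext c; simp only [AddMonoidHom.mk'_apply, AddMonoidHom.add_apply, map_add]; ring)
    with hBdef
  set ψ : F ⊗[ℤ] F →+ F := TensorProduct.liftAddHom B
    (fun r m n => by
      simp only [hBdef, AddMonoidHom.mk'_apply, map_zsmul, AddMonoidHom.smul_apply, smul_mul_assoc, mul_smul_comm,
        ← smul_add])
    with hψdef
  have hψt : ∀ a b : F, ψ (a ⊗ₜ[ℤ] b) = C a * C b + T a * T b + C a * T b := by
    intro a b; simp [hψdef, hBdef, TensorProduct.liftAddHom_tmul]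
  have hψe : ψ ((1:F) ⊗ₜ[ℤ] (1:F)) = 1 := by rw [hψt, hC1, hT1]; ring
  have hψf : ψ (α ⊗ₜ[ℤ] α) = 1 := by rw [hψt, hCa, hTa]; ring
  have hψg : ψ ((1:F) ⊗ₜ[ℤ] α + α ⊗ₜ[ℤ] (1:F)) = 1 := by
    rw [map_add, hψt, hψt, hC1, hT1, hCa, hTa]; ring
  -- 2-torsion in the tensor product
  have hz2 : ∀ z : F ⊗[ℤ] F, z + z = 0 := by
    intro z
    induction z using TensorProduct.induction_on with
    | zero => simp
    | tmul a b =>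
        rw [← TensorProduct.add_tmul, show a + a = 0 by linear_combination a * h2,
          TensorProduct.zero_tmul]
    | add x y hx hy => rw [show x + y + (x + y) = (x + x) + (y + y) by abel, hx, hy, add_zero]
  have hneg : ∀ z : F ⊗[ℤ] F, -z = z := fun z => neg_eq_of_add_eq_zero_left (hz2 z)
  -- field multiplication facts
  have hmaa : α * α = α + 1 := by linear_combination hα
  have hmab : α * (α + 1) = 1 := by linear_combination hα + α * h2
  have hmbb : (α + 1) * (α + 1) = α := by linear_combination hα + (α + 1) * h2
  -- generators of S
  have heS : (1:F) ⊗ₜ[ℤ] (1:F) ∈ S := AddSubgroup.subset_closure (by simp)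
  have hfS : α ⊗ₜ[ℤ] α ∈ S := AddSubgroup.subset_closure (by simp)
  have hgS : (1:F) ⊗ₜ[ℤ] α + α ⊗ₜ[ℤ] (1:F) ∈ S := AddSubgroup.subset_closure (by simp)
  have hmba : (α + 1) * α = 1 := by rw [mul_comm]; exact hmab
  have hdiag : ∀ (u : Fˣ) (a b : F),
      diagAct u (a ⊗ₜ[ℤ] b) = ((u:F) * a) ⊗ₜ[ℤ] ((u:F) * b) := by
    intro u a b; erw [diagAct, TensorProduct.map_tmul]; rfl
  -- invariance of ψ on S
  have hinv : ∀ (u : Fˣ) (x : F ⊗[ℤ] F), x ∈ S → ψ (diagAct u x) = ψ x := by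
    intro u x hx
    rcases henum (u : F) with h | h | h | h
    · exact absurd h u.ne_zero
    all_goals
      refine AddSubgroup.closure_induction ?_ (by simp) 
        (fun a b _ _ ha hb => by simp only [map_add, ha, hb]) 
        (fun a _ ha => by simp only [map_neg, ha]) hx
      intro z hz
      simp only [Set.mem_insert_iff, Set.mem_singleton_iff] at hz
      rcases hz with rfl | rfl | rfl <;>
        simp only [hdiag, map_add, h, one_mul, mul_one, hmaa, hmab, hmba, hmbb, hψt,
          hC1, hCa, hCb, hT1, hTa, hTb] <;>
        first
          | ring1
          | linear_combination h2
          | linear_combination 2 * h2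
          | linear_combination 3 * h2
  -- ψ vanishes on K
  have hKψ : ∀ z ∈ K, ψ z = 0 := by
    intro z hz
    refine AddSubgroup.closure_induction ?_ (by simp)
      (fun a b _ _ ha hb => by simp only [map_add, ha, hb, add_zero])
      (fun a _ ha => by simp only [map_neg, ha, neg_zero]) hz
    rintro d ⟨u, x, hxS, rfl⟩
    rw [map_sub, hinv u x hxS, sub_self]
  -- membership of the three even elements in K
  have hDmem : ∀ (u : Fˣ) (x : F ⊗[ℤ] F), x ∈ S → diagAct u x - x ∈ K :=
    fun u x hx => AddSubgroup.subset_closure ⟨u, x, hx, rfl⟩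
  set uA : Fˣ := Units.mk0 α hα0 with huA
  set uB : Fˣ := Units.mk0 (α+1) hab0 with huB
  have huAv : (uA : F) = α := rfl
  have huBv : (uB : F) = α + 1 := rfl
  have hexp : ((α+1) ⊗ₜ[ℤ] (α+1) : F ⊗[ℤ] F)
      = (1:F) ⊗ₜ[ℤ] (1:F) + ((1:F) ⊗ₜ[ℤ] α + α ⊗ₜ[ℤ] (1:F)) + α ⊗ₜ[ℤ] α := by
    rw [TensorProduct.add_tmul, TensorProduct.tmul_add, TensorProduct.tmul_add]
    abel
  have kef : (1:F) ⊗ₜ[ℤ] (1:F) + α ⊗ₜ[ℤ] α ∈ K := by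
    have h := hDmem uA _ heS
    rw [hdiag, huAv, mul_one] at h
    rwa [show α ⊗ₜ[ℤ] α - (1:F) ⊗ₜ[ℤ] (1:F) = (1:F) ⊗ₜ[ℤ] (1:F) + α ⊗ₜ[ℤ] α from by
      rw [sub_eq_add_neg, hneg, add_comm]] at h
  have keg : (1:F) ⊗ₜ[ℤ] (1:F) + ((1:F) ⊗ₜ[ℤ] α + α ⊗ₜ[ℤ] (1:F)) ∈ K := by
    have h := hDmem uA _ hfS
    rw [hdiag, huAv, hmaa, hexp] at h
    rwa [show (1:F) ⊗ₜ[ℤ] (1:F) + ((1:F) ⊗ₜ[ℤ] α + α ⊗ₜ[ℤ] (1:F)) + α ⊗ₜ[ℤ] α - α ⊗ₜ[ℤ] α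
      = (1:F) ⊗ₜ[ℤ] (1:F) + ((1:F) ⊗ₜ[ℤ] α + α ⊗ₜ[ℤ] (1:F)) from by abel] at h
  have kfg : α ⊗ₜ[ℤ] α + ((1:F) ⊗ₜ[ℤ] α + α ⊗ₜ[ℤ] (1:F)) ∈ K := by
    have h := hDmem uB _ heS
    rw [hdiag, huBv, mul_one, hexp] at h
    rwa [show (1:F) ⊗ₜ[ℤ] (1:F) + ((1:F) ⊗ₜ[ℤ] α + α ⊗ₜ[ℤ] (1:F)) + α ⊗ₜ[ℤ] α
        - (1:F) ⊗ₜ[ℤ] (1:F)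
      = α ⊗ₜ[ℤ] α + ((1:F) ⊗ₜ[ℤ] α + α ⊗ₜ[ℤ] (1:F)) from by abel] at h
  -- values of ψ on S are 0 or 1
  have hS01 : ∀ x ∈ S, ψ x = 0 ∨ ψ x = 1 := by
    intro x hx
    refine AddSubgroup.closure_induction ?_ (by simp) ?_ ?_ hx
    · intro z hz
      simp only [Set.mem_insert_iff, Set.mem_singleton_iff] at hz
      rcases hz with rfl | rfl | rfl
      · exact Or.inr hψe
      · exact Or.inr hψf
      · exact Or.inr hψg
    · intro a b _ _ ha hb
      rw [map_add]
      rcases ha with ha | ha <;> rcases hb with hb | hb <;> rw [ha, hb] <;>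
        simp [h11]
    · intro a _ ha
      rw [map_neg]
      rcases ha with ha | ha <;> rw [ha]
      · exact Or.inl neg_zero
      · exact Or.inr (by linear_combination -h2)
  -- every element of S is in K or differs from e by K
  have hSC : ∀ x ∈ S, x ∈ K ∨ x + (1:F) ⊗ₜ[ℤ] (1:F) ∈ K := by
    intro x hx
    refine AddSubgroup.closure_induction ?_ (Or.inl K.zero_mem) ?_ ?_ hx
    · intro z hz
      simp only [Set.mem_insert_iff, Set.mem_singleton_iff] at hz
      rcases hz with rfl | rfl | rfl
      · exact Or.inr (by rw [hz2]; exact K.zero_mem)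
      · exact Or.inr (by rw [add_comm]; exact kef)
      · exact Or.inr (by rw [add_comm]; exact keg)
    · intro a b _ _ ha hb
      rcases ha with ha | ha <;> rcases hb with hb | hb
      · exact Or.inl (K.add_mem ha hb)
      · exact Or.inr (by rw [add_assoc]; exact K.add_mem ha hb)
      · exact Or.inr (by rw [show a + b + (1:F) ⊗ₜ[ℤ] (1:F)
            = (a + (1:F) ⊗ₜ[ℤ] (1:F)) + b from by abel]; exact K.add_mem ha hb)
      · refine Or.inl ?_
        rw [show a + b = (a + (1:F) ⊗ₜ[ℤ] (1:F)) + (b + (1:F) ⊗ₜ[ℤ] (1:F))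
            - ((1:F) ⊗ₜ[ℤ] (1:F) + (1:F) ⊗ₜ[ℤ] (1:F)) from by abel, hz2, sub_zero]
        exact K.add_mem ha hb
    · intro a _ ha
      rw [hneg]; exact ha
  -- ψ x = 0 ↔ x ∈ K, for x ∈ S
  have hiff : ∀ x ∈ S, (ψ x = 0 ↔ x ∈ K) := by
    intro x hx
    constructor
    · intro h0
      rcases hSC x hx with h | h
      · exact h
      · exfalso
        have := hKψ _ h
        rw [map_add, h0, hψe, zero_add] at this
        exact one_ne_zero this
    · exact hKψ x
  -- the quotient map
  set Φ : S →+ ZMod 2 := AddMonoidHom.mk'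
    (fun x => if ψ (x : F ⊗[ℤ] F) = 0 then 0 else 1)
    (by
      rintro ⟨a, haS⟩ ⟨b, hbS⟩
      simp only [AddSubgroup.coe_add, map_add]
      rcases hS01 a haS with ha | ha <;> rcases hS01 b hbS with hb | hb <;>
        rw [ha, hb] <;> simp [h11] <;> decide)
    with hΦdef
  have hΦker : ∀ x : S, Φ x = 0 ↔ x ∈ K.addSubgroupOf S := by
    intro x
    rw [AddSubgroup.mem_addSubgroupOf, ← hiff _ x.2]
    simp only [hΦdef, AddMonoidHom.mk'_apply]
    split
    · next h => exact iff_of_true rfl h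
    · next h => exact iff_of_false (by decide) h
  -- assemble the isomorphism
  refine ⟨AddEquiv.ofBijective (QuotientAddGroup.lift (K.addSubgroupOf S) Φ
    (fun x hx => AddMonoidHom.mem_ker.mpr ((hΦker x).mpr hx))) ⟨?_, ?_⟩⟩
  · rw [injective_iff_map_eq_zero]
    intro q hq
    induction q using QuotientAddGroup.induction_on with
    | H s =>
      rw [QuotientAddGroup.lift_mk'] at hq
      exact (QuotientAddGroup.eq_zero_iff s).mpr ((hΦker s).mp hq)
  · intro c
    have hc : c = 0 ∨ c = 1 := by revert c; decide
    rcases hc with rfl | rfl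
    · exact ⟨0, map_zero _⟩
    · refine ⟨QuotientAddGroup.mk ⟨_, heS⟩, ?_⟩
      show Φ ⟨_, heS⟩ = 1
      simp only [hΦdef, AddMonoidHom.mk'_apply]
      rw [if_neg]
      intro h
      rw [hψe] at h
      exact one_ne_zero h
end

section
/- For the finite field 𝔽_8 = 𝔽_2[α]/(α³ = α+1), the coinvariants of the diagonal action of 𝔽_8^× on the subgroup (𝔽_8 ⊗_ℤ 𝔽_8)^{-σ} generated by 1⊗1, α⊗α, α²⊗α², 1⊗α + α⊗1, 1⊗α² + α²⊗1, α²⊗α + α⊗α² are trivial. -/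
/-!
Let `T` be the diagonal action of `α` and `g₁, …, g₆` the six generators in the order listed.
Every `x ∈ S` is congruent to `T x` modulo `K`. In characteristic `2` (forced by `#F = 8`),
`α³ = α + 1` gives `T g₁ = g₂`, `T g₂ = g₃`, `T g₃ = g₁ + g₂ + g₄`, `T g₄ = g₆`, `T g₅ = g₄` and
`T g₆ = g₆ + g₅`. Hence `g₅ ≡ 0`, then `g₄ ≡ g₆ ≡ 0`, and `g₁ ≡ g₂ ≡ g₃ ≡ g₁ + g₂ + g₄ ≡ 2 g₁`
forces `g₁ ≡ 0`.
-/

open scoped TensorProduct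

theorem closure_le_of_forall_sub_mem {M : Type*} [AddCommGroup M] (T : M → M)
    (K : AddSubgroup M) {g₁ g₂ g₃ g₄ g₅ g₆ : M}
    (hK : ∀ x ∈ AddSubgroup.closure {g₁, g₂, g₃, g₄, g₅, g₆}, T x - x ∈ K)
    (h₁ : T g₁ = g₂) (h₂ : T g₂ = g₃) (h₃ : T g₃ = g₁ + g₂ + g₄) (h₄ : T g₄ = g₆)
    (h₅ : T g₅ = g₄) (h₆ : T g₆ = g₆ + g₅) :
    AddSubgroup.closure {g₁, g₂, g₃, g₄, g₅, g₆} ≤ K := by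
  have hT : ∀ g ∈ ({g₁, g₂, g₃, g₄, g₅, g₆} : Set M), (T g : M ⧸ K) = g := fun g hg =>
    QuotientAddGroup.eq_iff_sub_mem.2 (hK g (AddSubgroup.subset_closure hg))
  have e₁ : (g₂ : M ⧸ K) = g₁ := h₁ ▸ hT g₁ (by simp)
  have e₂ : (g₃ : M ⧸ K) = g₂ := h₂ ▸ hT g₂ (by simp)
  have e₃ : ((g₁ + g₂ + g₄ : M) : M ⧸ K) = g₃ := h₃ ▸ hT g₃ (by simp)
  have e₄ : (g₆ : M ⧸ K) = g₄ := h₄ ▸ hT g₄ (by simp)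
  have e₅ : (g₄ : M ⧸ K) = g₅ := h₅ ▸ hT g₅ (by simp)
  have z₅ : (g₅ : M ⧸ K) = 0 := by
    simpa only [h₆, QuotientAddGroup.mk_add, add_eq_left] using hT g₆ (by simp)
  have z₄ : (g₄ : M ⧸ K) = 0 := e₅.trans z₅
  have z₁ : (g₁ : M ⧸ K) = 0 := by
    rwa [QuotientAddGroup.mk_add, QuotientAddGroup.mk_add, e₂, e₁, z₄, add_zero,
      add_eq_left] at e₃
  have z₂ : (g₂ : M ⧸ K) = 0 := e₁.trans z₁
  have z₃ : (g₃ : M ⧸ K) = 0 := e₂.trans z₂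
  have z₆ : (g₆ : M ⧸ K) = 0 := e₄.trans z₄
  refine AddSubgroup.closure_le _ |>.2 fun g hg => (QuotientAddGroup.eq_zero_iff g).1 ?_
  rcases hg with rfl | rfl | rfl | rfl | rfl | rfl <;> assumption

open TensorProduct

theorem diagAct_tmul {F : Type} [Field F] (u : Fˣ) (a b : F) :
    diagAct u (a ⊗ₜ[ℤ] b) = (u * a : F) ⊗ₜ (u * b : F) :=
  rfl

theorem diagAct_generators {F : Type} [Field F] [CharP F 2] {α : F} (hα : α ^ 3 = α + 1)
    {u : Fˣ} (hu : (u : F) = α) :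
    diagAct u ((1 : F) ⊗ₜ[ℤ] (1 : F)) = α ⊗ₜ α ∧
    diagAct u (α ⊗ₜ[ℤ] α) = (α ^ 2) ⊗ₜ (α ^ 2) ∧
    diagAct u ((α ^ 2) ⊗ₜ[ℤ] (α ^ 2)) =
      (1 : F) ⊗ₜ (1 : F) + α ⊗ₜ α + ((1 : F) ⊗ₜ α + α ⊗ₜ (1 : F)) ∧
    diagAct u ((1 : F) ⊗ₜ[ℤ] α + α ⊗ₜ[ℤ] (1 : F)) = (α ^ 2) ⊗ₜ α + α ⊗ₜ (α ^ 2) ∧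
    diagAct u ((1 : F) ⊗ₜ[ℤ] (α ^ 2) + (α ^ 2) ⊗ₜ[ℤ] (1 : F)) = (1 : F) ⊗ₜ α + α ⊗ₜ (1 : F) ∧
    diagAct u ((α ^ 2) ⊗ₜ[ℤ] α + α ⊗ₜ[ℤ] (α ^ 2)) =
      (α ^ 2) ⊗ₜ α + α ⊗ₜ (α ^ 2) + ((1 : F) ⊗ₜ (α ^ 2) + (α ^ 2) ⊗ₜ (1 : F)) := by
  have hα₂ : α * α = α ^ 2 := (sq α).symm
  have hα₃ : α * α ^ 2 = α + 1 := by rw [← pow_succ', hα]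
  have hαα : α ⊗ₜ[ℤ] α + α ⊗ₜ[ℤ] α = 0 := by
    rw [← add_tmul, CharTwo.add_self_eq_zero, zero_tmul]
  simp only [map_add, diagAct_tmul, hu, mul_one, hα₂, hα₃, add_tmul, tmul_add, true_and]
  refine ⟨by abel, by abel, ?_, by abel⟩
  rw [add_add_add_comm, hαα, zero_add, add_comm]

/-- For `𝔽₈ = 𝔽₂[α]/(α³ = α + 1)`, the coinvariants of the diagonal `𝔽₈ˣ`-action on the
subgroup `(𝔽₈ ⊗_ℤ 𝔽₈)^{-σ}` generated by `1⊗1`, `α⊗α`, `α²⊗α²`, `1⊗α + α⊗1`,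
`1⊗α² + α²⊗1`, `α²⊗α + α⊗α²` are trivial, i.e. this subgroup is contained in the subgroup
generated by the elements `u·x - x`. -/
theorem stmt_9 (F : Type) [Field F] [Fintype F] (hF : Fintype.card F = 8)
    (α : F) (hα : α ^ 3 = α + 1) :
    let S : AddSubgroup (F ⊗[ℤ] F) := AddSubgroup.closure
      {(1 : F) ⊗ₜ[ℤ] (1 : F), α ⊗ₜ[ℤ] α, (α ^ 2) ⊗ₜ[ℤ] (α ^ 2),
       (1 : F) ⊗ₜ[ℤ] α + α ⊗ₜ[ℤ] (1 : F),
       (1 : F) ⊗ₜ[ℤ] (α ^ 2) + (α ^ 2) ⊗ₜ[ℤ] (1 : F),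
       (α ^ 2) ⊗ₜ[ℤ] α + α ⊗ₜ[ℤ] (α ^ 2)}
    let K : AddSubgroup (F ⊗[ℤ] F) := AddSubgroup.closure
      {d | ∃ u : Fˣ, ∃ x ∈ S, d = diagAct u x - x}
    S ≤ K := by
  intro S K
  have : CharP F 2 := ringChar.of_eq (FiniteField.even_card_iff_char_two.2 (by rw [hF]))
  have hα₀ : α ≠ 0 := by
    rintro rfl
    norm_num at hα
  let u := Units.mk0 α hα₀
  obtain ⟨h₁, h₂, h₃, h₄, h₅, h₆⟩ := diagAct_generators hα (u := u) rfl
  exact closure_le_of_forall_sub_mem (diagAct u) K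
    (fun x hx => AddSubgroup.subset_closure ⟨u, x, hx, rfl⟩) h₁ h₂ h₃ h₄ h₅ h₆
end
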